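/- arXiv:1707.08789 — 7 statements merged into one kernel-verified Lean document; each statement's English description precedes it below -/
import Mathlib

section
/- Let σ : F_q^n → F_q^n be an F_q-linear map and let C be a q-ary [n,k] linear code with generator matrix G (a k×n matrix over F_q whose rows form a basis of C). Let G^σ denote the k×n matrix whose i-th row is σ applied to the i-th row of G. Then dim_{F_q}(C ∩ C^{⊥_σ}) = k − rank(G·(G^σ)^T). -/
open scoped BigOperators
open Matrix

/-! Since the rows of `G` are a basis of `C`, the map `a ↦ a ᵥ* G` is an isomorphism from `F^k`
onto `C`. The vector `a ᵥ* G` is orthogonal to every `σ (G j)` exactly when `a ᵥ* G * (G^σ)ᵀ = 0`,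
so the hull is the image of the left kernel of `G * (G^σ)ᵀ`, and rank–nullity gives its dimension. -/

/-- The Euclidean dual of a linear code `C ⊆ F^ι`:
`C^⊥ = {b | ∀ c ∈ C, ∑ i, b i * c i = 0}`. -/
def dualCode {F : Type*} [Field F] {ι : Type*} [Fintype ι]
    (C : Submodule F (ι → F)) : Submodule F (ι → F) where
  carrier := {b | ∀ c ∈ C, ∑ i, b i * c i = 0}
  zero_mem' := by intro c hc; simp
  add_mem' := by
    intro x y hx hy c hc
    simp only [Set.mem_setOf_eq, Pi.add_apply, add_mul, Finset.sum_add_distrib,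
      hx c hc, hy c hc, add_zero]
  smul_mem' := by
    intro r x hx c hc
    simp only [Set.mem_setOf_eq, Pi.smul_apply, smul_eq_mul, mul_assoc,
      ← Finset.mul_sum, hx c hc, mul_zero]

theorem mem_dualCode_span_iff {F ι : Type*} [Field F] [Fintype ι] (S : Set (ι → F))
    (x : ι → F) : x ∈ dualCode (Submodule.span F S) ↔ ∀ s ∈ S, x ⬝ᵥ s = 0 := by
  refine ⟨fun hx s hs => hx s (Submodule.subset_span hs), fun hx c hc => ?_⟩
  change x ⬝ᵥ c = 0
  induction hc using Submodule.span_induction with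
  | mem s hs => exact hx s hs
  | zero => exact dotProduct_zero x
  | add c d _ _ hc hd => rw [dotProduct_add, hc, hd, add_zero]
  | smul r c _ hc => rw [dotProduct_smul, hc, smul_zero]

theorem vecMul_mem_dualCode_map_span_iff {F m ι : Type*} [Field F] [Fintype m] [Fintype ι]
    (σ : (ι → F) →ₗ[F] (ι → F)) (G : Matrix m ι F) (a : m → F) :
    a ᵥ* G ∈ dualCode ((Submodule.span F (Set.range G.row)).map σ) ↔
      a ᵥ* (G * (Matrix.of fun i => σ (G i))ᵀ) = 0 := by
  rw [Submodule.map_span, mem_dualCode_span_iff, ← Set.range_comp, Set.forall_mem_range,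
    ← vecMul_vecMul, vecMul_transpose, funext_iff]
  simp only [mulVec, dotProduct_comm]
  rfl

theorem Submodule.finrank_range_inf_eq_finrank_comap {R M N : Type*} [Ring R]
    [AddCommGroup M] [Module R M] [AddCommGroup N] [Module R N] (f : M →ₗ[R] N)
    (hf : Function.Injective f) (p : Submodule R N) :
    Module.finrank R ↥(LinearMap.range f ⊓ p) = Module.finrank R (p.comap f) := by
  rw [← Submodule.map_comap_eq]
  exact (LinearEquiv.finrank_eq (Submodule.equivMapOfInjective f hf _)).symm

theorem Matrix.finrank_ker_vecMulLinear {F m n : Type*} [Field F] [Fintype m] [Fintype n]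
    (M : Matrix m n F) :
    Module.finrank F (LinearMap.ker M.vecMulLinear) = Fintype.card m - M.rank := by
  have h := LinearMap.finrank_range_add_finrank_ker Mᵀ.mulVecLin
  rw [mulVecLin_transpose, Module.finrank_fintype_fun_eq_card] at h
  rw [← rank_transpose M, Matrix.rank, mulVecLin_transpose]
  omega

/-- Let `σ : F_q^n → F_q^n` be an `F_q`-linear map and `C` a `q`-ary `[n,k]` linear code
with generator matrix `G` (its rows form a basis of `C`).  Let `G^σ` be the matrix whose
`i`-th row is `σ` applied to the `i`-th row of `G`.  Then
`dim (C ∩ C^{⊥_σ}) = k - rank (G * (G^σ)ᵀ)`, where `C^{⊥_σ} = (σ(C))^⊥`. -/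
theorem dim_hull_eq_k_sub_rank {F : Type*} [Field F] {n k : ℕ}
    (σ : (Fin n → F) →ₗ[F] (Fin n → F))
    (C : Submodule F (Fin n → F)) (G : Matrix (Fin k) (Fin n) F)
    (hspan : Submodule.span F (Set.range fun i => G i) = C)
    (hli : LinearIndependent F fun i => G i) :
    Module.finrank F ↥(C ⊓ dualCode (C.map σ)) =
      k - (G * (Matrix.of fun i => σ (G i))ᵀ).rank := by
  set M := G * (Matrix.of fun i => σ (G i))ᵀ
  set D := dualCode (C.map σ) with hD
  have hC : C = LinearMap.range G.vecMulLinear := by rw [range_vecMulLinear, ← hspan]; rfl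
  have hDcomap : D.comap G.vecMulLinear = LinearMap.ker M.vecMulLinear := by
    ext a
    rw [Submodule.mem_comap, LinearMap.mem_ker, hD, ← hspan]
    exact vecMul_mem_dualCode_map_span_iff σ G a
  rw [hC, Submodule.finrank_range_inf_eq_finrank_comap _ (vecMul_injective_iff.mpr hli),
    hDcomap, Matrix.finrank_ker_vecMulLinear, Fintype.card_fin]
end

section
/- Let q > 2 and let C be any q-ary linear code of length n. Then there exists a monomial transformation σ of F_q^n such that C is σ-LCD, i.e. C ∩ (σ(C))^⊥ = {0}. -/
open scoped BigOperators

/-- The monomial transformation of `F^ι` given by a coordinate permutation `π` and a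
diagonal part `d` (multiplication of each coordinate by a scalar), as a linear map. -/
def monoMap {F : Type*} [Field F] {ι : Type*} (π : Equiv.Perm ι) (d : ι → F) :
    (ι → F) →ₗ[F] (ι → F) where
  toFun v := fun i => d i * v (π i)
  map_add' := by intro a b; funext i; simp [mul_add]
  map_smul' := by intro r a; funext i; simp; ring

/-!
Fix a generator matrix `G` of `C` and a diagonal map `x ↦ D x`, `D = diag d`. A codeword `t G`
lies in `(D C)^⊥` iff `t` is in the left kernel of the Gram matrix `G D Gᵀ`, so `C` is LCD for
`D` as soon as `det (G D Gᵀ) ≠ 0`. Changing `d j` to `t` adds `t • g gᵀ` (`g` the `j`-th column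
of `G`) to a fixed matrix, and the determinant of `A + t • g gᵀ` is affine in `t`; hence
`d ↦ det (G D Gᵀ)` is affine in each coordinate. It is nonzero at the indicator of an
information set `S`, where `G D Gᵀ = G_S G_Sᵀ`. Finally, an affine function `a + b t` that is
not identically zero vanishes at most once, so for `q > 2` it has a nonzero non-root: the
coordinates of `d` can be made nonzero one at a time.
-/

open Matrix

namespace Matrix

variable {R : Type*} [CommRing R] {m n : Type*} [Fintype m] [DecidableEq m]

theorem det_add_smul_vecMulVec (A : Matrix m m R) (u v : m → R) (t : R) :
    det (A + t • vecMulVec u v) = det A + t * (det (A + vecMulVec u v) - det A) := by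
  let B : Matrix (m ⊕ Unit) (m ⊕ Unit) R := fromBlocks A 0 (replicateRow Unit v) 1
  -- `A + s • u vᵀ` is a Schur complement of a bordered matrix whose border column is affine in `s`
  have hB : ∀ s : R, det (A + s • vecMulVec u v) =
      det (updateCol B (Sum.inr ()) (Sum.elim 0 1)) +
        s * det (updateCol B (Sum.inr ()) (Sum.elim (-u) 0)) := by
    intro s
    have hborder : fromBlocks A (replicateCol Unit (-(s • u))) (replicateRow Unit v) 1 =
        updateCol B (Sum.inr ()) (Sum.elim (0 : m → R) 1 + s • Sum.elim (-u) 0) := by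
      ext (i | i) (j | j) <;> simp [B]
    rw [← det_updateCol_smul, ← det_updateCol_add, ← hborder, det_fromBlocks_one₂₂,
      vecMulVec_eq Unit, ← neg_smul, replicateCol_smul, Matrix.smul_mul, neg_smul,
      sub_neg_eq_add]
  have h₀ := hB 0
  have h₁ := hB 1
  rw [zero_smul, add_zero] at h₀
  rw [one_smul] at h₁
  rw [hB t]
  linear_combination (t - 1) * h₀ - t * h₁

variable [Fintype n] [DecidableEq n]

omit [Fintype m] [DecidableEq m] in
theorem mul_diagonal_mul_transpose_apply (G : Matrix m n R) (d : n → R) (a b : m) :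
    (G * diagonal d * Gᵀ) a b = ∑ i, d i * G a i * G b i := by
  rw [mul_apply]
  simp only [mul_diagonal, transpose_apply]
  exact Finset.sum_congr rfl fun i _ => by ring

omit [Fintype m] [DecidableEq m] in
theorem mul_diagonal_update_mul_transpose (G : Matrix m n R) (d : n → R) (j : n) (t : R) :
    G * diagonal (Function.update d j t) * Gᵀ =
      G * diagonal (Function.update d j 0) * Gᵀ + t • vecMulVec (G.col j) (G.col j) := by
  ext a b
  simp only [mul_diagonal_mul_transpose_apply, Function.update_apply, ite_mul, Finset.sum_ite,
    Finset.filter_eq', Finset.mem_univ, ↓reduceIte, Finset.sum_singleton, add_apply, zero_mul,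
    Finset.sum_const_zero, zero_add, smul_apply, vecMulVec_apply, col_apply, smul_eq_mul]
  ring

omit [DecidableEq m] in
theorem mul_diagonal_indicator_mul_transpose (G : Matrix m n R) {c : m → n}
    (hc : Function.Injective c) :
    G * diagonal (fun i => if i ∈ Finset.univ.image c then (1 : R) else 0) * Gᵀ =
      G.submatrix id c * (G.submatrix id c)ᵀ := by
  ext a b
  simp only [mul_diagonal_mul_transpose_apply, ite_mul, one_mul, zero_mul, Finset.sum_ite_mem,
    Finset.univ_inter, Finset.sum_image hc.injOn]
  rfl

end Matrix

def IsAffineInEachCoord {ι R : Type*} [CommRing R] [DecidableEq ι] (f : (ι → R) → R) : Prop :=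
  ∀ x i, ∃ a b : R, ∀ t, f (Function.update x i t) = a + b * t

theorem isAffineInEachCoord_det_mul_diagonal_mul_transpose {R : Type*} [CommRing R]
    {m n : Type*} [Fintype m] [DecidableEq m] [Fintype n] [DecidableEq n] (G : Matrix m n R) :
    IsAffineInEachCoord fun d : n → R => det (G * diagonal d * Gᵀ) := fun d j =>
  ⟨_, _, fun t => by
    dsimp only
    rw [mul_diagonal_update_mul_transpose, det_add_smul_vecMulVec, mul_comm]⟩

section Field

variable {K : Type*} [Field K]

theorem exists_ne_zero_add_mul_ne_zero [Fintype K] (hK : 2 < Fintype.card K) {a b s : K}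
    (h : a + b * s ≠ 0) : ∃ t ≠ 0, a + b * t ≠ 0 := by
  classical
  have hcard : 1 < (Finset.univ.erase (0 : K)).card := by
    rw [Finset.card_erase_of_mem (Finset.mem_univ _), Finset.card_univ]
    omega
  obtain ⟨t₁, ht₁, t₂, ht₂, hne⟩ := Finset.one_lt_card.mp hcard
  by_contra! hzero
  have h₁ := hzero t₁ (Finset.ne_of_mem_erase ht₁)
  have h₂ := hzero t₂ (Finset.ne_of_mem_erase ht₂)
  have hb : b = 0 := by
    have : b * (t₁ - t₂) = 0 := by linear_combination h₁ - h₂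
    exact (mul_eq_zero.mp this).resolve_right (sub_ne_zero.mpr hne)
  exact h (by linear_combination h₁ + (s - t₁) * hb)

theorem IsAffineInEachCoord.exists_forall_ne_zero {ι : Type*} [Fintype ι] [DecidableEq ι]
    [Fintype K] (hK : 2 < Fintype.card K) {f : (ι → K) → K} (hf : IsAffineInEachCoord f)
    {x : ι → K} (hx : f x ≠ 0) : ∃ y, (∀ i, y i ≠ 0) ∧ f y ≠ 0 := by
  suffices ∀ s : Finset ι, ∃ y, (∀ i ∈ s, y i ≠ 0) ∧ f y ≠ 0 by
    obtain ⟨y, hy, hfy⟩ := this Finset.univ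
    exact ⟨y, fun i => hy i (Finset.mem_univ i), hfy⟩
  intro s
  induction s using Finset.induction_on with
  | empty => exact ⟨x, by simp, hx⟩
  | @insert j s hj ih =>
    obtain ⟨y, hy, hfy⟩ := ih
    obtain ⟨a, b, hab⟩ := hf y j
    obtain ⟨t, ht, hft⟩ := exists_ne_zero_add_mul_ne_zero hK (s := y j)
      (by rwa [← hab, Function.update_eq_self])
    refine ⟨Function.update y j t, fun i hi => ?_, by rwa [hab]⟩
    rcases Finset.mem_insert.mp hi with rfl | hi
    · rwa [Function.update_self]
    · rw [Function.update_of_ne (ne_of_mem_of_not_mem hi hj)]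
      exact hy i hi

variable {m n : Type*} [Fintype m] [DecidableEq m] [Fintype n]

theorem Matrix.exists_injective_isUnit_submatrix (G : Matrix m n K)
    (hG : LinearIndependent K G.row) :
    ∃ c : m → n, Function.Injective c ∧ IsUnit (G.submatrix id c) := by
  obtain ⟨f, hf_mem, -, hf_li⟩ := Submodule.exists_fun_fin_finrank_span_eq K (Set.range G.col)
  choose c hc using hf_mem
  have hrank : Fintype.card m = Module.finrank K (Submodule.span K (Set.range G.col)) := by
    rw [← rank_eq_finrank_span_cols, rank_eq_finrank_span_row, finrank_span_eq_card hG]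
  let e := Fintype.equivFinOfCardEq hrank
  have hli : LinearIndependent K (G.col ∘ c ∘ e) := by
    rw [← Function.comp_assoc, show G.col ∘ c = f from funext hc]
    exact hf_li.comp e e.injective
  exact ⟨c ∘ e, hli.injective.of_comp, linearIndependent_cols_iff_isUnit.mp hli⟩

variable [DecidableEq n]

theorem Matrix.exists_det_mul_diagonal_mul_transpose_ne_zero (G : Matrix m n K)
    (hG : LinearIndependent K G.row) : ∃ d : n → K, det (G * diagonal d * Gᵀ) ≠ 0 := by
  obtain ⟨c, hc, hunit⟩ := G.exists_injective_isUnit_submatrix hG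
  have hdet : det (G.submatrix id c) ≠ 0 := (isUnit_iff_isUnit_det _ |>.mp hunit).ne_zero
  exact ⟨_, by
    rw [mul_diagonal_indicator_mul_transpose G hc, det_mul, det_transpose]
    exact mul_ne_zero hdet hdet⟩

theorem inf_dualCode_map_monoMap_one_eq_bot {C : Submodule K (n → K)} {G : Matrix m n K}
    (hG : Submodule.span K (Set.range G.row) = C) {d : n → K}
    (hd : det (G * diagonal d * Gᵀ) ≠ 0) :
    C ⊓ dualCode (C.map (monoMap 1 d)) = ⊥ := by
  have hC : ∀ x, x ∈ C ↔ ∃ t, t ᵥ* G = x := fun x => by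
    rw [← hG, ← range_vecMulLinear]
    rfl
  rw [Submodule.eq_bot_iff]
  rintro x ⟨hxC, hx⟩
  obtain ⟨t, rfl⟩ := (hC x).mp hxC
  have hform : ∀ w, t ⬝ᵥ (G * diagonal d * Gᵀ) *ᵥ w = 0 := fun w => by
    have := hx _ (Submodule.mem_map_of_mem ((hC (w ᵥ* G)).mpr ⟨w, rfl⟩))
    calc t ⬝ᵥ (G * diagonal d * Gᵀ) *ᵥ w = (t ᵥ* G) ⬝ᵥ diagonal d *ᵥ (w ᵥ* G) := by
          rw [← mulVec_mulVec, ← mulVec_mulVec, dotProduct_mulVec, mulVec_transpose]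
      _ = 0 := by simpa [monoMap, mulVec_diagonal, dotProduct] using this
  rw [separatingLeft_def.mp (nondegenerate_of_det_ne_zero hd).separatingLeft t hform, zero_vecMul]

end Field

/-- Let `q > 2` and let `C` be any `q`-ary linear code of length `n`.  Then there exists
a monomial transformation `σ` of `F_q^n` (a permutation `π` together with nonzero scalars
`d i`) such that `C` is `σ`-LCD, i.e. `C ∩ (σ(C))^⊥ = {0}`. -/
theorem exists_monomial_lcd {F : Type*} [Field F] [Fintype F] {n : ℕ}
    (hq : 2 < Fintype.card F) (C : Submodule F (Fin n → F)) :
    ∃ (π : Equiv.Perm (Fin n)) (d : Fin n → F), (∀ i, d i ≠ 0) ∧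
      C ⊓ dualCode (C.map (monoMap π d)) = ⊥ := by
  obtain ⟨G, -, hG_span, hG_li⟩ := Submodule.exists_fun_fin_finrank_span_eq F (C : Set (Fin n → F))
  obtain ⟨d₀, hd₀⟩ := Matrix.exists_det_mul_diagonal_mul_transpose_ne_zero (of G) hG_li
  obtain ⟨d, hd, hdet⟩ :=
    (isAffineInEachCoord_det_mul_diagonal_mul_transpose (of G)).exists_forall_ne_zero hq hd₀
  exact ⟨1, d, hd, inf_dualCode_map_monoMap_one_eq_bot (hG_span.trans C.span_eq) hdet⟩
end

section
/- Let C be a binary linear code of length n and let {0}×C := {(0,c) ∈ F_2 × F_2^n : c ∈ C} ⊆ F_2^{n+1}. Then there exists a coordinate permutation σ of F_2^{n+1} such that {0}×C is σ-LCD, i.e. ({0}×C) ∩ (σ({0}×C))^⊥ = {0}. -/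
open scoped BigOperators

/-- The coordinate permutation of `F^ι` associated with a permutation `π` of the
coordinates, as a linear map. -/
def permMap {F : Type*} [Field F] {ι : Type*} (π : Equiv.Perm ι) :
    (ι → F) →ₗ[F] (ι → F) where
  toFun v := fun i => v (π i)
  map_add' := fun _ _ => rfl
  map_smul' := fun _ _ => rfl

/-- The linear embedding `c ↦ (0, c)` of `F^n` into `F^(n+1)`. -/
def consMap {F : Type*} [Field F] {n : ℕ} : (Fin n → F) →ₗ[F] (Fin (n + 1) → F) where
  toFun v := Fin.cons 0 v
  map_add' := by
    intro a b; funext i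
    refine Fin.cases ?_ ?_ i <;> simp
  map_smul' := by
    intro r a; funext i
    refine Fin.cases ?_ ?_ i <;> simp

/-!
`D` is `σ`-LCD exactly when the bilinear form `B_σ(x, y) = x ⬝ᵥ (y ∘ σ)` restricted to `D` has
trivial left radical. Take `σ` minimising the dimension of that radical and suppose it is nonzero.
By finite-dimensionality the right radical is nonzero too; pick `x₀` and `y₀` in them. Since `D`
vanishes at a fixed coordinate, `x₀` and `y₀ ∘ σ` are nonconstant, so some pair `a, b` separates
both. Composing `σ` with the transposition `(a b)` adds the rank-one term
`(x a - x b) * (y (σ b) - y (σ a))` to the form. Pairing with `y₀` shows every `x` in the new left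
radical has `x a = x b`, hence lies in the old one, while `x₀` drops out: the radical shrinks,
contradicting minimality.
-/

open Matrix

lemma exists_apply_ne_apply_and_apply_ne_apply {ι α β : Type*} {f : ι → α} {g : ι → β}
    (hf : ∃ a b, f a ≠ f b) (hg : ∃ a b, g a ≠ g b) :
    ∃ a b, f a ≠ f b ∧ g a ≠ g b := by
  obtain ⟨a, b, hfab⟩ := hf
  by_cases hgab : g a = g b
  · obtain ⟨c, hgc⟩ : ∃ c, g c ≠ g a := by
      obtain ⟨c, d, hcd⟩ := hg
      by_cases hc : g c = g a
      · exact ⟨d, fun hd => hcd (hc.trans hd.symm)⟩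
      · exact ⟨c, hc⟩
    by_cases hfc : f c = f a
    · exact ⟨b, c, fun h => hfab (h ▸ hfc.symm), fun h => hgc (h ▸ hgab.symm)⟩
    · exact ⟨a, c, Ne.symm hfc, Ne.symm hgc⟩
  · exact ⟨a, b, hfab, hgab⟩

lemma exists_apply_ne_apply_of_ne_zero {ι M : Type*} [Zero M] {x : ι → M} (hx : x ≠ 0)
    {i₀ : ι} (h : x i₀ = 0) :
    ∃ a b, x a ≠ x b := by
  obtain ⟨j, hj⟩ := Function.ne_iff.mp hx
  exact ⟨j, i₀, by rwa [h]⟩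

variable {F ι : Type*} [Field F] [Fintype ι]

lemma LinearMap.separatingLeft_iff_separatingRight_of_finiteDimensional
    {V : Type*} [AddCommGroup V] [Module F V] [FiniteDimensional F V]
    (B : V →ₗ[F] V →ₗ[F] F) : B.SeparatingLeft ↔ B.SeparatingRight :=
  let b := Module.finBasis F V
  (separatingLeft_iff_det_ne_zero b).trans (separatingRight_iff_det_ne_zero b).symm

def permForm (σ : Equiv.Perm ι) : (ι → F) →ₗ[F] (ι → F) →ₗ[F] F :=
  (dotProductBilin F F).compl₂ (permMap σ)

lemma permForm_apply (σ : Equiv.Perm ι) (x y : ι → F) :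
    permForm σ x y = x ⬝ᵥ (y ∘ σ) := rfl

lemma permForm_mul_swap [DecidableEq ι] (σ : Equiv.Perm ι) (a b : ι) (x y : ι → F) :
    permForm (σ * Equiv.swap a b) x y =
      permForm σ x y + (x a - x b) * (y (σ b) - y (σ a)) := by
  have hdiff : y ∘ ⇑(σ * Equiv.swap a b) =
      y ∘ σ + (Pi.single a (y (σ b) - y (σ a)) - Pi.single b (y (σ b) - y (σ a))) := by
    funext i
    rcases eq_or_ne i a with rfl | hia
    · rcases eq_or_ne i b with rfl | hib <;> simp [*]
    · rcases eq_or_ne i b with rfl | hib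
      · simp [hia]
      · simp [hia, hib, Equiv.swap_apply_of_ne_of_ne]
  rw [permForm_apply, permForm_apply, hdiff, dotProduct_add, dotProduct_sub,
    dotProduct_single, dotProduct_single]
  ring

def permHull (D : Submodule F (ι → F)) (σ : Equiv.Perm ι) : Submodule F (ι → F) :=
  D ⊓ dualCode (D.map (permMap σ))

variable {D : Submodule F (ι → F)} {σ : Equiv.Perm ι}

lemma mem_permHull_iff {x : ι → F} :
    x ∈ permHull D σ ↔ x ∈ D ∧ ∀ y ∈ D, permForm σ x y = 0 := by
  show x ∈ D ∧ (∀ c ∈ D.map (permMap σ), ∑ i, x i * c i = 0) ↔ _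
  simp only [Submodule.mem_map, forall_exists_index, and_imp, forall_apply_eq_imp_iff₂]
  rfl

lemma permHull_eq_bot_iff :
    permHull D σ = ⊥ ↔ ((permForm σ).domRestrict₁₂ D D).SeparatingLeft := by
  simp [Submodule.eq_bot_iff, mem_permHull_iff, LinearMap.SeparatingLeft,
    LinearMap.domRestrict₁₂_apply]

lemma exists_ne_zero_forall_permForm_eq_zero (h : permHull D σ ≠ ⊥) :
    ∃ y ∈ D, y ≠ 0 ∧ ∀ x ∈ D, permForm σ x y = 0 := by
  rw [Ne, permHull_eq_bot_iff,
    LinearMap.separatingLeft_iff_separatingRight_of_finiteDimensional] at h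
  simp only [LinearMap.SeparatingRight, not_forall] at h
  obtain ⟨⟨y, hy⟩, hxy, hy0⟩ := h
  exact ⟨y, hy, by simpa using hy0, fun x hx => hxy ⟨x, hx⟩⟩

lemma permHull_mul_swap_lt [DecidableEq ι] {x₀ y₀ : ι → F} {a b : ι}
    (hx₀ : x₀ ∈ permHull D σ) (hy₀D : y₀ ∈ D) (hy₀ : ∀ x ∈ D, permForm σ x y₀ = 0)
    (hx₀ab : x₀ a ≠ x₀ b) (hy₀ab : y₀ (σ a) ≠ y₀ (σ b)) :
    permHull D (σ * Equiv.swap a b) < permHull D σ := by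
  have hy₀ba : y₀ (σ b) - y₀ (σ a) ≠ 0 := sub_ne_zero.mpr hy₀ab.symm
  refine SetLike.lt_iff_le_and_exists.mpr ⟨fun x hx => ?_, x₀, hx₀, fun hx₀' => ?_⟩
  · obtain ⟨hxD, hx⟩ := mem_permHull_iff.mp hx
    have hxab : x a - x b = 0 := by
      have hxy₀ := hx y₀ hy₀D
      rw [permForm_mul_swap, hy₀ x hxD, zero_add] at hxy₀
      exact (mul_eq_zero.mp hxy₀).resolve_right hy₀ba
    exact mem_permHull_iff.mpr
      ⟨hxD, fun y hy => by simpa [permForm_mul_swap, hxab] using hx y hy⟩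
  · have hx₀y₀ := (mem_permHull_iff.mp hx₀').2 y₀ hy₀D
    rw [permForm_mul_swap, hy₀ x₀ (mem_permHull_iff.mp hx₀).1, zero_add] at hx₀y₀
    exact mul_ne_zero (sub_ne_zero.mpr hx₀ab) hy₀ba hx₀y₀

theorem exists_permHull_eq_bot (i₀ : ι) (hD : ∀ x ∈ D, x i₀ = 0) :
    ∃ σ, permHull D σ = ⊥ := by
  classical
  obtain ⟨σ, hσ⟩ := Finite.exists_min fun σ : Equiv.Perm ι => Module.finrank F (permHull D σ)
  refine ⟨σ, by_contra fun hne => ?_⟩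
  obtain ⟨x₀, hx₀, hx₀0⟩ := Submodule.exists_mem_ne_zero_of_ne_bot hne
  obtain ⟨y₀, hy₀D, hy₀0, hy₀⟩ := exists_ne_zero_forall_permForm_eq_zero hne
  obtain ⟨c, d, hcd⟩ := exists_apply_ne_apply_of_ne_zero hy₀0 (hD y₀ hy₀D)
  obtain ⟨a, b, hx₀ab, hy₀ab⟩ := exists_apply_ne_apply_and_apply_ne_apply (g := y₀ ∘ σ)
    (exists_apply_ne_apply_of_ne_zero hx₀0 (hD x₀ (mem_permHull_iff.mp hx₀).1))
    ⟨σ.symm c, σ.symm d, by simpa using hcd⟩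
  exact (hσ (σ * Equiv.swap a b)).not_gt
    (Submodule.finrank_lt_finrank_of_lt (permHull_mul_swap_lt hx₀ hy₀D hy₀ hx₀ab hy₀ab))

/-- Let `C` be a binary linear code of length `n` and `{0} × C ⊆ F_2^(n+1)`.  Then
there exists a coordinate permutation `σ` of `F_2^(n+1)` such that `{0} × C` is
`σ`-LCD, i.e. `({0} × C) ∩ (σ({0} × C))^⊥ = {0}`. -/
theorem exists_perm_lcd_zero_cross_binary {n : ℕ}
    (C : Submodule (ZMod 2) (Fin n → ZMod 2)) :
    ∃ σ : Equiv.Perm (Fin (n + 1)),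
      (C.map consMap) ⊓ dualCode ((C.map consMap).map (permMap σ)) = ⊥ :=
  exists_permHull_eq_bot 0 (by rintro _ ⟨c, -, rfl⟩; rfl)
end

section
/- Let q > 2. If there exist q-ary linear codes with parameters [n,k,d_1] and [n,k,d_2], then there exists a q-ary LCP of codes with parameters [n,k,d_1,d_2]; that is, there exist q-ary linear codes C_1 and C_2 of length n with dim C_1 = k, dim C_2 = n−k, C_1 + C_2 = F_q^n, the minimum distance of C_1 equal to d_1, and the minimum distance of C_2^⊥ equal to d_2. -/
open scoped BigOperators

/-- The (linear) code `C` has minimum distance `d`: some nonzero codeword has Hamming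
weight `d` and every nonzero codeword has Hamming weight at least `d`. -/
def hasMinDist {F : Type*} [Field F] [DecidableEq F] {ι : Type*} [Fintype ι]
    (C : Submodule F (ι → F)) (d : ℕ) : Prop :=
  (∃ c ∈ C, c ≠ 0 ∧ hammingNorm c = d) ∧ ∀ c ∈ C, c ≠ 0 → d ≤ hammingNorm c

/-!
Choose information sets `S₁` of `D₁` and `S₂` of `D₂` and a coordinate permutation carrying
`S₂` to `S₁`, so that `S₁` is an information set of both `D₁` and the permuted code `V`.
For weights `a`, put `C₂ = (a ⋆ V)^⊥`, where `a ⋆ V = {a * y | y ∈ V}` coordinatewise; then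
`D₁ ∩ C₂ = 0` says that `(x, y) ↦ ∑ aᵢ xᵢ yᵢ` is nondegenerate on `D₁ × V`. This holds for
the indicator weights of `S₁`. Changing one weight perturbs the pairing by a rank-one term, so
it destroys nondegeneracy for at most one value of that weight; with `q > 2` each zero weight
can be made nonzero while keeping nondegeneracy. The resulting `a ⋆ V = C₂^⊥` is monomially
equivalent to `D₂`, hence has minimum distance `d₂`, and `D₁ ⊕ C₂ = F^n` by counting
dimensions.
-/

open Finset

section
variable {F : Type*} [Field F] {ι : Type*} [Fintype ι]

theorem mem_dualCode {C : Submodule F (ι → F)} {b : ι → F} :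
    b ∈ dualCode C ↔ ∀ c ∈ C, b ⬝ᵥ c = 0 := Iff.rfl

theorem dualCode_eq_comap_dualAnnihilator [DecidableEq ι] (C : Submodule F (ι → F)) :
    dualCode C = C.dualAnnihilator.comap (dotProductEquiv F ι).toLinearMap :=
  Submodule.ext fun _ => by simp [mem_dualCode, Submodule.mem_dualAnnihilator]

theorem finrank_dualCode (C : Submodule F (ι → F)) :
    Module.finrank F (dualCode C) = Fintype.card ι - Module.finrank F C := by
  classical
  have := Subspace.finrank_add_finrank_dualAnnihilator_eq C
  rw [dualCode_eq_comap_dualAnnihilator, Submodule.comap_equiv_eq_map_symm,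
    LinearEquiv.finrank_map_eq, Module.finrank_fintype_fun_eq_card] at *
  omega

theorem dualCode_dualCode (C : Submodule F (ι → F)) : dualCode (dualCode C) = C := by
  refine (Submodule.eq_of_le_of_finrank_eq (fun c hc b hb => ?_) ?_).symm
  · exact (dotProduct_comm c b).trans (hb c hc)
  · have := Submodule.finrank_le C
    rw [finrank_dualCode, finrank_dualCode, Module.finrank_fintype_fun_eq_card] at *
    omega

theorem dualCode_map_mulLeft (a : ι → F) (V : Submodule F (ι → F)) :
    dualCode (V.map (LinearMap.mulLeft F a)) = (dualCode V).comap (LinearMap.mulLeft F a) := by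
  ext x
  simp only [mem_dualCode, Submodule.mem_map, Submodule.mem_comap, forall_exists_index, and_imp,
    forall_apply_eq_imp_iff₂, LinearMap.mulLeft_apply]
  simp only [dotProduct, Pi.mul_apply, mul_left_comm (x _), mul_assoc]
end

theorem exists_ne_and_of_subsingleton_setOf_not {α : Type*} [Fintype α]
    (hα : 2 < Fintype.card α) (c : α) {p : α → Prop} (hp : {s | ¬p s}.Subsingleton) :
    ∃ s, s ≠ c ∧ p s := by
  classical
  by_contra! H
  have hcard : 1 < (univ.erase c).card := by
    rw [card_erase_of_mem (mem_univ c), card_univ]; omega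
  obtain ⟨s, hs, t, ht, hst⟩ := Finset.one_lt_card.1 hcard
  exact hst (hp (H s (ne_of_mem_erase hs)) (H t (ne_of_mem_erase ht)))

theorem exists_forall_ne_zero_of_subsingleton_setOf_not {F : Type*} [Ring F] [Fintype F]
    {ι : Type*} [Fintype ι] [DecidableEq ι] (hF : 2 < Fintype.card F) {P : (ι → F) → Prop}
    (hP : ∀ a, P a → ∀ l, {s : F | ¬P (a + s • Pi.single l 1)}.Subsingleton)
    {a : ι → F} (ha : P a) : ∃ b, (∀ i, b i ≠ 0) ∧ P b := by
  suffices ∀ T : Finset ι, ∃ b, (∀ i ∈ T, b i ≠ 0) ∧ P b by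
    obtain ⟨b, hb, hPb⟩ := this univ
    exact ⟨b, fun i => hb i (mem_univ i), hPb⟩
  intro T
  induction T using Finset.induction_on with
  | empty => exact ⟨a, by simp, ha⟩
  | insert l T _ ih =>
    obtain ⟨b, hb, hPb⟩ := ih
    obtain ⟨s, hs, hPs⟩ := exists_ne_and_of_subsingleton_setOf_not hF (-b l) (hP b hPb l)
    refine ⟨b + s • Pi.single l 1, fun i hi => ?_, hPs⟩
    rcases eq_or_ne i l with rfl | hil
    · simpa [add_eq_zero_iff_eq_neg'] using hs
    · simpa [hil] using hb i ((mem_insert.1 hi).resolve_left hil)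

section
variable {F M N : Type*} [Field F] [AddCommGroup M] [Module F M] [AddCommGroup N] [Module F N]

theorem subsingleton_setOf_not_disjoint_comap_add_smul_smulRight {C : Submodule F M}
    {W : Submodule F N} {f : M →ₗ[F] N} (h : Disjoint C (W.comap f)) (φ : M →ₗ[F] F) (e : N) :
    {s : F | ¬Disjoint C (W.comap (f + s • φ.smulRight e))}.Subsingleton := by
  intro s hs t ht
  have witness : ∀ {s : F}, ¬Disjoint C (W.comap (f + s • φ.smulRight e)) →
      ∃ x ∈ C, φ x ≠ 0 ∧ f x + (s * φ x) • e ∈ W := by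
    intro s hs
    rw [Submodule.disjoint_def] at hs
    push Not at hs
    obtain ⟨x, hxC, hxW, hx0⟩ := hs
    refine ⟨x, hxC, fun hφ => hx0 (Submodule.disjoint_def.1 h x hxC ?_), ?_⟩
    · simpa [hφ] using hxW
    · simpa [mul_smul] using hxW
  obtain ⟨x, hxC, hφx, hxW⟩ := witness hs
  obtain ⟨y, hyC, hφy, hyW⟩ := witness ht
  -- the rank-one terms of the two witnesses cancel in `z`
  set z := (t * φ y) • x - (s * φ x) • y
  have hfz : f z = (t * φ y) • (f x + (s * φ x) • e) - (s * φ x) • (f y + (t * φ y) • e) := by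
    simp only [z, map_sub, map_smul, smul_add, smul_smul]; module
  have hz : z = 0 := Submodule.disjoint_def.1 h z
    (C.sub_mem (C.smul_mem _ hxC) (C.smul_mem _ hyC))
    (by rw [Submodule.mem_comap, hfz]; exact W.sub_mem (W.smul_mem _ hxW) (W.smul_mem _ hyW))
  have hφz : (t - s) * (φ x * φ y) = 0 := by
    have := congrArg φ hz
    simp only [z, map_sub, map_smul, smul_eq_mul, map_zero] at this
    linear_combination this
  simpa [sub_eq_zero, hφx, hφy, eq_comm] using hφz
end

section
variable {F : Type*} [Field F] {ι : Type*}

def IsInformationSet (D : Submodule F (ι → F)) (S : Finset ι) : Prop :=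
  S.card = Module.finrank F D ∧ ∀ x ∈ D, (∀ i ∈ S, x i = 0) → x = 0

theorem exists_isInformationSet [Fintype ι] (D : Submodule F (ι → F)) :
    ∃ S, IsInformationSet D S := by
  classical
  let φ : ι → Module.Dual F D := fun i => (LinearMap.proj i).comp D.subtype
  obtain ⟨κ, e, he, hspan, hli⟩ := exists_linearIndependent' F φ
  have : Fintype κ := Fintype.ofInjective e he
  have hvan : ∀ x ∈ D, (∀ j, x (e j) = 0) → x = 0 := by
    intro x hx h0
    have hker : Submodule.span F (Set.range (φ ∘ e)) ≤
        LinearMap.ker (Module.Dual.eval F D ⟨x, hx⟩) :=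
      Submodule.span_le.2 (Set.range_subset_iff.2 h0)
    rw [hspan] at hker
    funext i
    exact hker (Submodule.subset_span ⟨i, rfl⟩)
  let r : D →ₗ[F] (κ → F) := LinearMap.pi fun j => φ (e j)
  have hr : Function.Injective r := by
    rw [← LinearMap.ker_eq_bot, Submodule.eq_bot_iff]
    exact fun x hx => Subtype.ext (hvan x x.2 (congrFun hx))
  refine ⟨univ.map ⟨e, he⟩, le_antisymm ?_ ?_, fun x hx h0 => hvan x hx fun j => h0 _ ?_⟩
  · rw [card_map, card_univ, ← Subspace.dual_finrank_eq]
    exact hli.fintype_card_le_finrank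
  · simpa using LinearMap.finrank_le_finrank_of_injective hr
  · exact mem_map_of_mem _ (mem_univ j)

theorem IsInformationSet.exists_eq_on [Fintype ι] {D : Submodule F (ι → F)} {S : Finset ι}
    (hS : IsInformationSet D S) (w : ι → F) : ∃ y ∈ D, ∀ i ∈ S, y i = w i := by
  let r : D →ₗ[F] (S → F) := (LinearMap.funLeft F F ((↑) : S → ι)).comp D.subtype
  have hr : Function.Injective r := by
    rw [← LinearMap.ker_eq_bot, Submodule.eq_bot_iff]
    exact fun x hx => Subtype.ext (hS.2 x x.2 fun i hi => congrFun hx ⟨i, hi⟩)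
  have hrank : Module.finrank F D = Module.finrank F (S → F) := by
    rw [Module.finrank_fintype_fun_eq_card, Fintype.card_coe, hS.1]
  obtain ⟨y, hy⟩ := (LinearMap.injective_iff_surjective_of_finrank_eq_finrank hrank).1 hr
    fun i => w i
  exact ⟨y, y.2, fun i hi => congrFun hy ⟨i, hi⟩⟩

theorem IsInformationSet.map_funCongrLeft {D : Submodule F (ι → F)} {S : Finset ι}
    {σ : Equiv.Perm ι} (hS : IsInformationSet D (S.map σ.toEmbedding)) :
    IsInformationSet (D.map (LinearEquiv.funCongrLeft F F σ).toLinearMap) S := by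
  refine ⟨by rw [LinearEquiv.finrank_map_eq, ← hS.1, card_map], ?_⟩
  rintro _ ⟨x, hx, rfl⟩ h0
  have : x = 0 := hS.2 x hx fun i hi => by
    obtain ⟨j, hj, rfl⟩ := mem_map.1 hi
    exact h0 j hj
  simp [this]
end

section
variable {F : Type*} [Field F] {ι : Type*}

theorem finrank_map_mulLeft {a : ι → F} (ha : ∀ i, a i ≠ 0) (V : Submodule F (ι → F)) :
    Module.finrank F (V.map (LinearMap.mulLeft F a)) = Module.finrank F V :=
  (Submodule.equivMapOfInjective _
    (fun _ _ h => funext fun i => mul_left_cancel₀ (ha i) (congrFun h i)) V).finrank_eq.symm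

theorem mulLeft_add_smul_single [DecidableEq ι] (a : ι → F) (l : ι) (s : F) :
    LinearMap.mulLeft F (a + s • Pi.single l 1) =
      LinearMap.mulLeft F a + s • (LinearMap.proj l).smulRight (Pi.single l 1) := by
  ext x i
  rcases eq_or_ne i l with rfl | hil <;> simp [*, add_mul]

theorem disjoint_comap_mulLeft_indicator [Fintype ι] [DecidableEq ι]
    {C V : Submodule F (ι → F)} {S : Finset ι}
    (hC : ∀ x ∈ C, (∀ i ∈ S, x i = 0) → x = 0) (hV : ∀ w : ι → F, ∃ y ∈ V, ∀ i ∈ S, y i = w i) :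
    Disjoint C ((dualCode V).comap (LinearMap.mulLeft F ((S : Set ι).indicator 1))) := by
  refine Submodule.disjoint_def.2 fun x hxC hx => hC x hxC fun l hl => ?_
  obtain ⟨y, hyV, hy⟩ := hV (Pi.single l 1 : ι → F)
  have hsingle : ∀ i, (S : Set ι).indicator 1 i * y i = (Pi.single l 1 : ι → F) i := by
    intro i
    by_cases hi : i ∈ S
    · simp [hi, hy i hi]
    · simp [hi, ne_of_mem_of_not_mem hl hi |>.symm]
  simpa [dotProduct, mul_right_comm _ (x _), hsingle, Pi.single_apply] using hx y hyV
end

section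
variable {F : Type*} [Field F] [DecidableEq F] {ι : Type*} [Fintype ι]

theorem hasMinDist_map {D : Submodule F (ι → F)} {d : ℕ} (f : (ι → F) →ₗ[F] (ι → F))
    (hf : ∀ x, hammingNorm (f x) = hammingNorm x) (hD : hasMinDist D d) :
    hasMinDist (D.map f) d := by
  obtain ⟨⟨c, hcD, hc0, hcd⟩, hmin⟩ := hD
  refine ⟨⟨f c, Submodule.mem_map_of_mem hcD, ?_, (hf c).trans hcd⟩, ?_⟩
  · rwa [← hammingNorm_ne_zero_iff, hf, hammingNorm_ne_zero_iff]
  · rintro _ ⟨x, hxD, rfl⟩ hx0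
    rw [hf]
    exact hmin x hxD (by rintro rfl; exact hx0 (map_zero f))

theorem hammingNorm_mul_of_ne_zero {a : ι → F} (ha : ∀ i, a i ≠ 0) (x : ι → F) :
    hammingNorm (a * x) = hammingNorm x :=
  hammingNorm_comp (fun i => (a i * ·)) (fun i => mul_right_injective₀ (ha i)) fun _ => mul_zero _

theorem hammingNorm_funCongrLeft (σ : Equiv.Perm ι) (x : ι → F) :
    hammingNorm (LinearEquiv.funCongrLeft F F σ x) = hammingNorm x := by
  show #{i | x (σ i) ≠ 0} = #{i | x i ≠ 0}
  exact card_equiv σ (by simp)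
end

/-- Let `q > 2`.  If there exist `q`-ary linear codes with parameters `[n,k,d₁]` and
`[n,k,d₂]`, then there exists a `q`-ary LCP of codes with parameters `[n,k,d₁,d₂]`:
codes `C₁, C₂` of length `n` with `dim C₁ = k`, `dim C₂ = n - k`, `C₁ + C₂ = F_q^n`,
the minimum distance of `C₁` equal to `d₁` and the minimum distance of `C₂^⊥` equal
to `d₂`. -/
theorem exists_lcp_of_codes_q_gt_two {F : Type*} [Field F] [Fintype F] [DecidableEq F]
    {n k d₁ d₂ : ℕ} (hq : 2 < Fintype.card F)
    (D₁ D₂ : Submodule F (Fin n → F))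
    (hD₁ : Module.finrank F D₁ = k) (hD₂ : Module.finrank F D₂ = k)
    (hd₁ : hasMinDist D₁ d₁) (hd₂ : hasMinDist D₂ d₂) :
    ∃ C₁ C₂ : Submodule F (Fin n → F),
      Module.finrank F C₁ = k ∧ Module.finrank F C₂ = n - k ∧
      C₁ ⊔ C₂ = ⊤ ∧ hasMinDist C₁ d₁ ∧ hasMinDist (dualCode C₂) d₂ := by
  obtain ⟨S₁, hS₁⟩ := exists_isInformationSet D₁
  obtain ⟨S₂, hS₂⟩ := exists_isInformationSet D₂
  obtain ⟨σ, hσ⟩ := Equiv.Perm.exists_map_finset_eq S₁ S₂ (by rw [hS₁.1, hS₂.1, hD₁, hD₂])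
  let V := D₂.map (LinearEquiv.funCongrLeft F F σ).toLinearMap
  have hV : IsInformationSet V S₁ := by
    rw [← hσ] at hS₂
    exact hS₂.map_funCongrLeft
  obtain ⟨a, ha, hdisj⟩ := exists_forall_ne_zero_of_subsingleton_setOf_not hq
    (P := fun a => Disjoint D₁ ((dualCode V).comap (LinearMap.mulLeft F a)))
    (fun a h l => by
      simpa only [mulLeft_add_smul_single] using
        subsingleton_setOf_not_disjoint_comap_add_smul_smulRight h (LinearMap.proj l) _)
    (disjoint_comap_mulLeft_indicator hS₁.2 hV.exists_eq_on)
  let E := V.map (LinearMap.mulLeft F a)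
  have hE : Module.finrank F E = k := by
    rw [finrank_map_mulLeft ha, ← hV.1, hS₁.1, hD₁]
  have hk : k ≤ n := by simpa [hD₁] using Submodule.finrank_le D₁
  refine ⟨D₁, dualCode E, hD₁, by rw [finrank_dualCode, hE, Fintype.card_fin], ?_, hd₁, ?_⟩
  · refine Submodule.eq_top_of_disjoint _ _ ?_ (by rwa [dualCode_map_mulLeft])
    rw [hD₁, finrank_dualCode, hE, Module.finrank_fin_fun, Fintype.card_fin]
    omega
  · rw [dualCode_dualCode]
    exact hasMinDist_map _ (hammingNorm_mul_of_ne_zero ha)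
      (hasMinDist_map _ (hammingNorm_funCongrLeft σ) hd₂)
end

section
/- Let m be a positive integer with gcd(m,q) = 1 and let C be any cyclic code of length m over F_q. Let σ : F_q^m → F_q^m be the coordinate reversal defined by σ(c_0, c_1, ..., c_{m−1}) = (c_{m−1}, c_{m−2}, ..., c_0). Then C is σ-LCD, i.e. C ∩ (σ(C))^⊥ = {0}. -/
open scoped BigOperators

/-- The coordinate reversal `σ(c_0, c_1, …, c_{m-1}) = (c_{m-1}, c_{m-2}, …, c_0)` of
`F^m`, with coordinates indexed by `ZMod m` (so `σ(c) i = c (-1 - i)`), as a linear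
map. -/
def revMap (F : Type*) [Field F] (m : ℕ) : (ZMod m → F) →ₗ[F] (ZMod m → F) where
  toFun v := fun i => v (-1 - i)
  map_add' := fun _ _ => rfl
  map_smul' := fun _ _ => rfl

open Polynomial in
private lemma xpow_mod_dvd {F : Type*} [Field F] (m : ℕ) (k : ℕ) :
    (X ^ m - 1 : F[X]) ∣ X ^ k - X ^ (k % m) := by
  have h1 : (X ^ k : F[X]) = (X ^ m) ^ (k / m) * X ^ (k % m) := by
    rw [← pow_mul, ← pow_add, Nat.div_add_mod]
  have h2 : (X ^ m - 1 : F[X]) ∣ (X ^ m) ^ (k / m) - 1 := by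
    simpa using sub_dvd_pow_sub_pow (X ^ m : F[X]) 1 (k / m)
  have h3 : (X ^ k - X ^ (k % m) : F[X])
      = ((X ^ m) ^ (k / m) - 1) * X ^ (k % m) := by rw [h1]; ring
  rw [h3]; exact h2.mul_right _

/-- Let `m` be a positive integer with `gcd(m,q) = 1` and `C` any cyclic code of length
`m` over `F_q` (an `F_q`-subspace of `F_q^m`, coordinates indexed by `ZMod m`, closed
under the cyclic shift).  Let `σ` be the coordinate reversal.  Then `C` is `σ`-LCD,
i.e. `C ∩ (σ(C))^⊥ = {0}`. -/
theorem cyclic_code_reversal_lcd {F : Type*} [Field F] [Fintype F] {m : ℕ} [NeZero m]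
    (hmq : Nat.Coprime m (Fintype.card F))
    (C : Submodule F (ZMod m → F)) (hC : ∀ c ∈ C, (fun i => c (i - 1)) ∈ C) :
    C ⊓ dualCode (C.map (revMap F m)) = ⊥ := by
  classical
  rw [Submodule.eq_bot_iff]
  rintro b ⟨hbC, hbD⟩
  have hm0 : 0 < m := Nat.pos_of_ne_zero (NeZero.ne m)
  -- all cyclic shifts of b lie in C
  have hshift : ∀ k : ℕ, (fun i => b (i - (k : ZMod m))) ∈ C := by
    intro k
    induction k with
    | zero => simpa using hbC
    | succ n ih =>
      have h := hC _ ih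
      have : (fun i : ZMod m => b (i - 1 - (n : ZMod m)))
          = fun i : ZMod m => b (i - ((n + 1 : ℕ) : ZMod m)) := by
        funext i
        push_cast
        ring_nf
      rwa [this] at h
  -- key orthogonality: all "coefficients of b(x)^2" vanish
  have hkey : ∀ n : ZMod m, ∑ i : ZMod m, b i * b (n - i) = 0 := by
    intro n
    have hc := hshift (-1 - n).val
    have h := hbD _ (Submodule.mem_map_of_mem hc)
    have hval : (((-1 - n).val : ZMod m)) = -1 - n := by
      rw [ZMod.natCast_val, ZMod.cast_id]
    simp only [revMap, LinearMap.coe_mk, AddHom.coe_mk, hval] at h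
    have : ∀ i : ZMod m, (-1 : ZMod m) - i - (-1 - n) = n - i := by intro i; ring
    simp only [this] at h
    exact h
  -- form the polynomial P(x) = Σ b_i x^{i.val}
  set P : Polynomial F := ∑ i : ZMod m, Polynomial.C (b i) * Polynomial.X ^ i.val with hP
  -- X^m - 1 divides P^2
  have hQ : ∑ i : ZMod m, ∑ j : ZMod m,
      Polynomial.C (b i * b j) * Polynomial.X ^ ((i + j).val) = 0 := by
    have step : ∀ i : ZMod m,
        ∑ j : ZMod m, Polynomial.C (b i * b j) * Polynomial.X ^ ((i + j).val)
          = ∑ n : ZMod m, Polynomial.C (b i * b (n - i)) * Polynomial.X ^ n.val := by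
      intro i
      refine Fintype.sum_equiv (Equiv.addLeft i)
        (fun j => Polynomial.C (b i * b j) * Polynomial.X ^ ((i + j).val))
        (fun n => Polynomial.C (b i * b (n - i)) * Polynomial.X ^ n.val) ?_
      intro j
      simp
    rw [Finset.sum_congr rfl (fun i _ => step i), Finset.sum_comm]
    refine Finset.sum_eq_zero fun n _ => ?_
    rw [← Finset.sum_mul, ← map_sum, hkey n, map_zero, zero_mul]
  have hdvd : (Polynomial.X ^ m - 1 : Polynomial F) ∣ P ^ 2 := by
    have hP2 : P ^ 2 = ∑ i : ZMod m, ∑ j : ZMod m,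
        Polynomial.C (b i * b j) * Polynomial.X ^ (i.val + j.val) := by
      rw [sq, hP, Finset.sum_mul_sum]
      refine Finset.sum_congr rfl fun i _ => Finset.sum_congr rfl fun j _ => ?_
      rw [map_mul, pow_add]; ring
    have : P ^ 2 = ∑ i : ZMod m, ∑ j : ZMod m,
        Polynomial.C (b i * b j) *
          (Polynomial.X ^ (i.val + j.val) - Polynomial.X ^ ((i + j).val)) := by
      rw [hP2, ← sub_zero (∑ i : ZMod m, ∑ j : ZMod m,
        Polynomial.C (b i * b j) * Polynomial.X ^ (i.val + j.val)), ← hQ,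
        ← Finset.sum_sub_distrib]
      refine Finset.sum_congr rfl fun i _ => ?_
      rw [← Finset.sum_sub_distrib]
      refine Finset.sum_congr rfl fun j _ => ?_
      ring
    rw [this]
    refine Finset.dvd_sum fun i _ => Finset.dvd_sum fun j _ => Dvd.dvd.mul_left ?_ _
    have := xpow_mod_dvd (F := F) m (i.val + j.val)
    rwa [← ZMod.val_add] at this
  -- X^m - 1 is squarefree
  have hmF : (m : F) ≠ 0 := by
    intro h
    have hq : ((Fintype.card F : ℕ) : F) = 0 := FiniteField.cast_card_eq_zero F
    have hbez := Nat.gcd_eq_gcd_ab m (Fintype.card F)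
    rw [hmq] at hbez
    have h2 := congrArg (fun z : ℤ => (z : F)) hbez
    push_cast at h2
    rw [h, hq] at h2
    simp at h2
  have hsq : Squarefree ((Polynomial.X : Polynomial F) ^ m - 1) := by
    have := Polynomial.separable_X_pow_sub_C (1 : F) hmF one_ne_zero
    rw [Polynomial.C_1] at this
    exact this.squarefree
  have hdvdP : (Polynomial.X ^ m - 1 : Polynomial F) ∣ P :=
    (hsq.dvd_pow_iff_dvd two_ne_zero).mp hdvd
  -- degree considerations force P = 0
  have hPzero : P = 0 := by
    refine Polynomial.eq_zero_of_dvd_of_degree_lt hdvdP ?_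
    have hdeg : (Polynomial.X ^ m - 1 : Polynomial F).degree = m :=
      by simpa using Polynomial.degree_X_pow_sub_C hm0 (1 : F)
    rw [hdeg]
    refine lt_of_le_of_lt (Polynomial.degree_sum_le _ _) ?_
    rw [Finset.sup_lt_iff (by exact_mod_cast WithBot.bot_lt_coe m)]
    intro i _
    refine lt_of_le_of_lt (Polynomial.degree_C_mul_X_pow_le _ _) ?_
    exact_mod_cast Nat.cast_lt.mpr (ZMod.val_lt i)
  -- extract coefficients
  funext i
  have hcoeff : P.coeff i.val = b i := by
    rw [hP, Polynomial.finset_sum_coeff]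
    rw [Finset.sum_eq_single i]
    · simp
    · intro j _ hj
      rw [Polynomial.coeff_C_mul, Polynomial.coeff_X_pow, if_neg, mul_zero]
      exact fun h => hj (ZMod.val_injective m (by omega))
    · simp
  rw [hPzero] at hcoeff
  simpa using hcoeff.symm
end

section
/- Let G be a finite abelian group and C an Abelian code in F_q[G], i.e. an ideal of the group algebra F_q[G]. Then C is μ_{−1}-LCD if and only if C is generated by an idempotent, i.e. C = F_q[G]·e for some e ∈ F_q[G] with e² = e. -/
/-!
Let `B a b` be the coefficient of `1` in `a * b`. Then `⟨b, μ₋₁ c⟩ = B b c`, so `C` is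
`μ₋₁`-LCD iff `C ∩ C^⊥ = 0` for `B`. The form `B` is symmetric, nondegenerate and associative
(`B (a * c) b = B a (c * b)`), so `C^⊥` is again an ideal and, by counting dimensions,
`C ⊕ C^⊥ = F[G]`. Writing `1 = e + f` with `e ∈ C`, `f ∈ C^⊥` gives `C * f ⊆ C ∩ C^⊥ = 0`,
so `e` is an idempotent generator of `C`. Conversely, if `C = (e)` and `x ∈ C ∩ C^⊥`, then
`B x b = B x (e * b) = 0` for every `b`, hence `x = 0`.
-/

open scoped BigOperators

/-- The map `μ_{-1}` on a group algebra, sending `∑ a_g g` to `∑ a_{g⁻¹} g`. -/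
noncomputable def gaMu {F : Type*} [Field F] {G : Type*} [CommGroup G]
    (a : MonoidAlgebra F G) : MonoidAlgebra F G :=
  MonoidAlgebra.ofCoeff (Finsupp.equivMapDomain (Equiv.inv G) a.coeff)

/-- The Euclidean dual of a subset of the group algebra `F[G]`, with respect to the
inner product `<∑ a_g g, ∑ b_g g> = ∑ g, a_g b_g`. -/
def gaDual {F : Type*} [Field F] {G : Type*} [CommGroup G] [Fintype G]
    (C : Set (MonoidAlgebra F G)) : Set (MonoidAlgebra F G) :=
  {b | ∀ c ∈ C, ∑ g : G, b.coeff g * c.coeff g = 0}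

namespace Ideal

theorem exists_isIdempotentElem_eq_span_singleton_of_isCompl {R : Type*} [CommSemiring R]
    {I J : Ideal R} (h : IsCompl I J) : ∃ e, IsIdempotentElem e ∧ I = span {e} := by
  obtain ⟨e, he, f, hf, hef⟩ : ∃ e ∈ I, ∃ f ∈ J, e + f = 1 :=
    Submodule.mem_sup.1 (h.sup_eq_top ▸ Submodule.mem_top)
  have mul_e : ∀ c ∈ I, c * e = c := fun c hc => by
    have hcf : c * f = 0 := (Submodule.mem_bot R).1 <|
      h.disjoint.le_bot ⟨I.mul_mem_right f hc, J.mul_mem_left c hf⟩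
    rw [← add_zero (c * e), ← hcf, ← mul_add, hef, mul_one]
  exact ⟨e, mul_e e he, le_antisymm (fun c hc => mem_span_singleton'.2 ⟨c, mul_e c hc⟩)
    (span_le.2 (Set.singleton_subset_iff.2 he))⟩

variable {F A : Type*} [Field F] [CommRing A] [Algebra F A]

def orthogonal (φ : A →ₗ[F] F) (I : Ideal A) : Ideal A where
  carrier := {x | ∀ c ∈ I, φ (c * x) = 0}
  add_mem' hx hy c hc := by simp only [mul_add, map_add, hx c hc, hy c hc, add_zero]
  zero_mem' c _ := by simp only [mul_zero, map_zero]
  smul_mem' r x hx c hc := by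
    rw [smul_eq_mul, ← mul_assoc]
    exact hx _ (I.mul_mem_right r hc)

variable {φ : A →ₗ[F] F} {I : Ideal A}

theorem mem_orthogonal {x : A} : x ∈ I.orthogonal φ ↔ ∀ c ∈ I, φ (c * x) = 0 := Iff.rfl

theorem restrictScalars_orthogonal :
    (I.orthogonal φ).restrictScalars F =
      LinearMap.BilinForm.orthogonal ((LinearMap.mul F A).compr₂ φ) (I.restrictScalars F) := by
  ext x
  simp [mem_orthogonal, LinearMap.BilinForm.mem_orthogonal_iff]

theorem isCompl_orthogonal_of_inf_eq_bot [FiniteDimensional F A]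
    (h : I ⊓ I.orthogonal φ = ⊥) : IsCompl I (I.orthogonal φ) := by
  have hrefl : LinearMap.BilinForm.IsRefl ((LinearMap.mul F A).compr₂ φ) := fun a b hab => by
    simpa [mul_comm] using hab
  have hcompl := (LinearMap.BilinForm.isCompl_orthogonal_iff_disjoint hrefl).2 <| by
    rw [← restrictScalars_orthogonal, disjoint_iff, ← Submodule.restrictScalars_inf, h,
      Submodule.restrictScalars_bot]
  rw [← restrictScalars_orthogonal] at hcompl
  exact ⟨disjoint_iff.2 h, codisjoint_iff.2 <| by
    simpa only [← Submodule.restrictScalars_sup, Submodule.restrictScalars_eq_top_iff]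
      using hcompl.sup_eq_top⟩

theorem span_singleton_inf_orthogonal_eq_bot (hφ : ∀ a : A, (∀ b, φ (a * b) = 0) → a = 0)
    {e : A} (he : IsIdempotentElem e) : span {e} ⊓ (span {e}).orthogonal φ = ⊥ := by
  refine eq_bot_iff.2 fun x ⟨hx, hx_orth⟩ => (Submodule.mem_bot A).2 <| hφ x fun b => ?_
  obtain ⟨r, rfl⟩ := mem_span_singleton'.1 hx
  have := hx_orth (e * b) (mem_span_singleton'.2 ⟨b, mul_comm b e⟩)
  rwa [show e * b * (r * e) = r * e * b by linear_combination (r * b) * he.eq] at this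

theorem inf_orthogonal_eq_bot_iff [FiniteDimensional F A]
    (hφ : ∀ a : A, (∀ b, φ (a * b) = 0) → a = 0) :
    I ⊓ I.orthogonal φ = ⊥ ↔ ∃ e, IsIdempotentElem e ∧ I = span {e} := by
  refine ⟨fun h => exists_isIdempotentElem_eq_span_singleton_of_isCompl
    (isCompl_orthogonal_of_inf_eq_bot h), ?_⟩
  rintro ⟨e, he, rfl⟩
  exact span_singleton_inf_orthogonal_eq_bot hφ he

end Ideal

namespace MonoidAlgebra

variable {R : Type*} [CommSemiring R]

variable (R) in
noncomputable def lcoeff {M : Type*} (m : M) : MonoidAlgebra R M →ₗ[R] R :=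
  Finsupp.lapply m ∘ₗ (coeffLinearEquiv R).toLinearMap

@[simp]
theorem lcoeff_apply {M : Type*} (m : M) (x : MonoidAlgebra R M) : lcoeff R m x = x.coeff m := rfl

variable {G : Type*} [Group G]

theorem eq_zero_of_forall_coeff_one_mul_eq_zero {a : MonoidAlgebra R G}
    (h : ∀ b, (a * b).coeff 1 = 0) : a = 0 := by
  ext g
  simpa using h (single g⁻¹ 1)

theorem sum_coeff_mul_coeff_inv [Fintype G] (a b : MonoidAlgebra R G) :
    ∑ g, a.coeff g * b.coeff g⁻¹ = (a * b).coeff 1 := by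
  rw [coeff_mul_apply_left, Finsupp.sum_fintype _ _ fun _ => zero_mul _]
  simp only [mul_one]

end MonoidAlgebra

open MonoidAlgebra

theorem gaDual_image_gaMu {F G : Type*} [Field F] [CommGroup G] [Fintype G]
    (C : Ideal (MonoidAlgebra F G)) :
    gaDual (gaMu '' (C : Set (MonoidAlgebra F G))) = C.orthogonal (lcoeff F 1) := by
  ext b
  simp only [gaDual, Set.mem_ofPred_eq, Set.forall_mem_image]
  refine forall₂_congr fun c _ => ?_
  rw [lcoeff_apply, mul_comm c, ← sum_coeff_mul_coeff_inv]
  rfl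

/-- Let `G` be a finite abelian group and `C` an Abelian code in `F_q[G]` (an ideal of
the group algebra).  Then `C` is `μ_{-1}`-LCD, i.e. `C ∩ (μ_{-1}(C))^⊥ = {0}`, if and
only if `C` is generated by an idempotent. -/
theorem abelian_code_mu_neg_one_lcd_iff_idempotent
    {F : Type*} [Field F] {G : Type*} [CommGroup G] [Fintype G]
    (C : Ideal (MonoidAlgebra F G)) :
    (C : Set (MonoidAlgebra F G)) ∩ gaDual (gaMu '' (C : Set (MonoidAlgebra F G))) = {0} ↔
      ∃ e : MonoidAlgebra F G, e * e = e ∧ C = Ideal.span {e} := by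
  rw [gaDual_image_gaMu, ← Submodule.coe_inf, ← Submodule.bot_coe (R := MonoidAlgebra F G),
    SetLike.coe_set_eq,
    Ideal.inf_orthogonal_eq_bot_iff fun _ => eq_zero_of_forall_coeff_one_mul_eq_zero]
  rfl
end

section
/- Let q be a prime power and G a finite abelian group with gcd(|G|, q) = 1. Then every Abelian code in F_q[G], i.e. every ideal of the group algebra F_q[G], is μ_{−1}-LCD. -/
open scoped BigOperators

namespace MonoidAlgebra

variable {R G : Type*} [CommRing R] [CommGroup G]

lemma coeff_mul_one [Fintype G] (x y : MonoidAlgebra R G) :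
    (x * y).coeff 1 = ∑ g : G, x.coeff g * y.coeff g⁻¹ := by
  rw [coeff_mul_apply_left, Finsupp.sum_fintype _ _ (by simp)]
  simp

lemma mul_eq_zero_of_forall_coeff_mul_one_eq_zero {I : Ideal (MonoidAlgebra R G)}
    {x : MonoidAlgebra R G} (hx : ∀ c ∈ I, (x * c).coeff 1 = 0) {c : MonoidAlgebra R G}
    (hc : c ∈ I) : x * c = 0 := by
  ext g
  simpa [← mul_assoc] using hx _ (I.mul_mem_right (single g⁻¹ 1) hc)

end MonoidAlgebra

lemma natCast_ne_zero_of_coprime_card {F : Type*} [Field F] [Fintype F] {n : ℕ}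
    (h : n.Coprime (Fintype.card F)) : (n : F) ≠ 0 := by
  intro hn
  obtain ⟨k, hp, hcard⟩ := FiniteField.card F (ringChar F)
  have hdvd_card : ringChar F ∣ Fintype.card F := hcard ▸ dvd_pow_self _ k.ne_zero
  exact hp.not_dvd_one (h ▸ Nat.dvd_gcd ((ringChar.spec F n).mp hn) hdvd_card)

lemma mem_gaDual_image_gaMu_iff {F G : Type*} [Field F] [CommGroup G] [Fintype G]
    {C : Set (MonoidAlgebra F G)} {x : MonoidAlgebra F G} :
    x ∈ gaDual (gaMu '' C) ↔ ∀ c ∈ C, (x * c).coeff 1 = 0 := by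
  simp [gaDual, gaMu, MonoidAlgebra.coeff_mul_one]

/-- Let `q` be a prime power and `G` a finite abelian group with `gcd(|G|, q) = 1`.
Then every Abelian code in `F_q[G]` (every ideal of the group algebra) is
`μ_{-1}`-LCD. -/
theorem abelian_code_semisimple_mu_neg_one_lcd
    {F : Type*} [Field F] [Fintype F] {G : Type*} [CommGroup G] [Fintype G]
    (hcop : Nat.Coprime (Fintype.card G) (Fintype.card F))
    (C : Ideal (MonoidAlgebra F G)) :
    (C : Set (MonoidAlgebra F G)) ∩ gaDual (gaMu '' (C : Set (MonoidAlgebra F G))) = {0} := by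
  have : NeZero (Nat.card G : F) :=
    ⟨Nat.card_eq_fintype_card (α := G) ▸ natCast_ne_zero_of_coprime_card hcop⟩
  refine Set.eq_singleton_iff_unique_mem.mpr ⟨⟨C.zero_mem, fun c _ ↦ by simp⟩, ?_⟩
  rintro x ⟨hxC, hxD⟩
  have hxx : x * x = 0 :=
    MonoidAlgebra.mul_eq_zero_of_forall_coeff_mul_one_eq_zero
      (mem_gaDual_image_gaMu_iff.mp hxD) hxC
  exact IsReduced.eq_zero x ⟨2, by rw [pow_two, hxx]⟩
end
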